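/- arXiv:1704.08010 — 5 statements merged into one kernel-verified Lean document; each statement's English description precedes it below -/
import Mathlib

section
/- Let E be a finite-dimensional complex inner product space and u₁,…,u_k, v₁,…,v_ℓ ∈ E. Then the Gram determinant of the concatenated tuple satisfies det(Gram(u₁,…,u_k,v₁,…,v_ℓ)) ≤ det(Gram(u₁,…,u_k)) · det(Gram(v₁,…,v_ℓ)) (all quantities being nonnegative reals). Equality holds if span(u₁,…,u_k) and span(v₁,…,v_ℓ) are orthogonal. -/
/-!
The Gram determinant of a tuple is the product of the squared lengths of its Gram–Schmidt
vectors, and the `i`-th Gram–Schmidt vector is the component of the `i`-th vector orthogonal to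
the span of its predecessors. In the concatenation `(u, v)` the first `k` Gram–Schmidt vectors
are those of `u`, while the one attached to `vⱼ` is the component of `vⱼ` orthogonal to
`span (u, v₁, …, vⱼ₋₁)`, which is no longer than its component orthogonal to
`span (v₁, …, vⱼ₋₁)`. When the two spans are orthogonal the Gram matrix is block diagonal.
-/

open scoped InnerProductSpace

/-- Gram determinant of a tuple of vectors. -/
noncomputable def gramDet {E : Type*} [NormedAddCommGroup E]
    [InnerProductSpace ℂ E] {m : Type*} [Fintype m] [DecidableEq m]
    (a : m → E) : ℂ :=
  Matrix.det (Matrix.of fun i j => ⟪a i, a j⟫_ℂ)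

open Matrix Submodule InnerProductSpace
open scoped ComplexOrder

instance Submodule.finiteDimensional_span_image {K V ι : Type*} [DivisionRing K]
    [AddCommGroup V] [Module K V] [Finite ι] (f : ι → V) (s : Set ι) :
    FiniteDimensional K (span K (f '' s)) :=
  FiniteDimensional.span_of_finite K (s.toFinite.image f)

theorem Fin.image_append_Iio_castAdd {α : Type*} {k ℓ : ℕ} (u : Fin k → α) (v : Fin ℓ → α)
    (i : Fin k) : Fin.append u v '' Set.Iio (Fin.castAdd ℓ i) = u '' Set.Iio i := by
  ext x
  constructor
  · rintro ⟨p, hp, rfl⟩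
    induction p using Fin.addCases with
    | left q => exact ⟨q, (Fin.strictMono_castAdd ℓ).lt_iff_lt.1 hp, (Fin.append_left u v q).symm⟩
    | right q =>
      have := Fin.lt_def.1 hp
      simp only [Fin.val_natAdd, Fin.val_castAdd] at this
      omega
  · rintro ⟨q, hq, rfl⟩
    exact ⟨Fin.castAdd ℓ q, Fin.strictMono_castAdd ℓ hq, Fin.append_left u v q⟩

section

variable {𝕜 E : Type*} [RCLike 𝕜] [NormedAddCommGroup E] [InnerProductSpace 𝕜 E]

theorem Submodule.norm_starProjection_le_of_le {K L : Submodule 𝕜 E} [K.HasOrthogonalProjection]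
    [L.HasOrthogonalProjection] (h : K ≤ L) (x : E) :
    ‖K.starProjection x‖ ≤ ‖L.starProjection x‖ := by
  rw [← starProjection_comp_starProjection_of_le h]
  exact norm_starProjection_apply_le K _

namespace InnerProductSpace

section GramSchmidt

variable {ι : Type*} [LinearOrder ι] [LocallyFiniteOrderBot ι] [WellFoundedLT ι]

theorem sub_gramSchmidt_mem_span_Iio (f : ι → E) (i : ι) :
    f i - gramSchmidt 𝕜 f i ∈ span 𝕜 (f '' Set.Iio i) := by
  rw [← span_gramSchmidt_Iio, gramSchmidt_def'' 𝕜 f i, add_sub_cancel_left]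
  exact sum_mem fun p hp => smul_mem _ _ (subset_span ⟨p, Finset.mem_Iio.1 hp, rfl⟩)

theorem gramSchmidt_mem_orthogonal_span_Iio (f : ι → E) (i : ι) :
    gramSchmidt 𝕜 f i ∈ (span 𝕜 (f '' Set.Iio i))ᗮ := by
  have h : span 𝕜 (gramSchmidt 𝕜 f '' Set.Iio i) ≤ (𝕜 ∙ gramSchmidt 𝕜 f i)ᗮ := by
    rw [span_le]
    rintro _ ⟨p, hp, rfl⟩
    exact mem_orthogonal_singleton_iff_inner_right.2 (gramSchmidt_orthogonal 𝕜 f hp.ne')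
  rw [← span_gramSchmidt_Iio]
  exact orthogonal_le h (le_orthogonal_orthogonal _ (mem_span_singleton_self _))

theorem gramSchmidt_eq_starProjection_orthogonal (f : ι → E) (i : ι)
    [(span 𝕜 (f '' Set.Iio i)).HasOrthogonalProjection] :
    gramSchmidt 𝕜 f i = (span 𝕜 (f '' Set.Iio i))ᗮ.starProjection (f i) :=
  (eq_starProjection_of_mem_orthogonal (gramSchmidt_mem_orthogonal_span_Iio f i)
    (le_orthogonal_orthogonal _ (sub_gramSchmidt_mem_span_Iio f i))).symm

theorem inner_gramSchmidt_self (f : ι → E) (i : ι) :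
    ⟪gramSchmidt 𝕜 f i, f i⟫_𝕜 = ‖gramSchmidt 𝕜 f i‖ ^ 2 := by
  rw [← sub_add_cancel (f i) (gramSchmidt 𝕜 f i), inner_add_right,
    inner_left_of_mem_orthogonal (sub_gramSchmidt_mem_span_Iio f i)
      (gramSchmidt_mem_orthogonal_span_Iio f i), zero_add, inner_self_eq_norm_sq_to_K]

theorem det_gram_eq_prod_norm_gramSchmidt_sq [Fintype ι] [DecidableEq ι] (f : ι → E) :
    (gram 𝕜 f).det = ((∏ i, ‖gramSchmidt 𝕜 f i‖ ^ 2 : ℝ) : 𝕜) := by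
  let g := gramSchmidt 𝕜 f
  let T : Matrix ι ι 𝕜 :=
    1 + of fun i p => if p < i then ⟪g p, f i⟫_𝕜 / (‖g p‖ : 𝕜) ^ 2 else 0
  let M : Matrix ι ι 𝕜 := of fun p j => ⟪g p, f j⟫_𝕜
  have hf : ∀ i, f i = ∑ p, T i p • g p := fun i => by
    simpa [T, add_smul, Finset.sum_add_distrib, one_apply, ite_smul, Finset.sum_ite,
      Finset.filter_gt_eq_Iio] using gramSchmidt_def'' 𝕜 f i
  have hgram : gram 𝕜 f = T.map star * M := by
    ext i j
    rw [gram_apply, hf i, sum_inner, mul_apply]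
    simp [inner_smul_left, M]
  have hT : (T.map star).IsLowerTriangular := fun i p (hip : i < p) => by
    simp [T, hip.ne, not_lt_of_gt hip]
  have hM : M.IsUpperTriangular := fun p j (hjp : j < p) => gramSchmidt_inv_triangular 𝕜 f hjp
  rw [hgram, det_mul, det_of_isLowerTriangular _ hT, det_of_isUpperTriangular hM]
  simp [T, M, g, inner_gramSchmidt_self]

end GramSchmidt

variable {k ℓ : ℕ}

theorem gramSchmidt_append_castAdd (u : Fin k → E) (v : Fin ℓ → E) (i : Fin k) :
    gramSchmidt 𝕜 (Fin.append u v) (Fin.castAdd ℓ i) = gramSchmidt 𝕜 u i := by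
  simp only [gramSchmidt_eq_starProjection_orthogonal, Fin.append_left,
    Fin.image_append_Iio_castAdd]

theorem norm_gramSchmidt_append_natAdd_le (u : Fin k → E) (v : Fin ℓ → E) (j : Fin ℓ) :
    ‖gramSchmidt 𝕜 (Fin.append u v) (Fin.natAdd k j)‖ ≤ ‖gramSchmidt 𝕜 v j‖ := by
  rw [gramSchmidt_eq_starProjection_orthogonal, gramSchmidt_eq_starProjection_orthogonal,
    Fin.append_right]
  refine norm_starProjection_le_of_le (orthogonal_le (span_mono ?_)) _
  rintro _ ⟨p, hp, rfl⟩
  exact ⟨Fin.natAdd k p, by simpa using hp, Fin.append_right u v p⟩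

end InnerProductSpace

namespace Matrix

theorem det_gram_append_le {k ℓ : ℕ} (u : Fin k → E) (v : Fin ℓ → E) :
    (gram 𝕜 (Fin.append u v)).det ≤ (gram 𝕜 u).det * (gram 𝕜 v).det := by
  simp only [det_gram_eq_prod_norm_gramSchmidt_sq, ← RCLike.ofReal_mul, RCLike.ofReal_le_ofReal,
    Fin.prod_univ_add, gramSchmidt_append_castAdd]
  gcongr with j
  exact norm_gramSchmidt_append_natAdd_le u v j

theorem det_gram_sumElim {k ℓ : ℕ} (u : Fin k → E) (v : Fin ℓ → E) :
    (gram 𝕜 (Sum.elim u v)).det = (gram 𝕜 (Fin.append u v)).det := by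
  rw [← Fin.append_comp_sumElim (xs := u) (ys := v)]
  exact det_submatrix_equiv_self finSumFinEquiv (gram 𝕜 (Fin.append u v))

theorem det_gram_sumElim_of_orthogonal {m n : Type*} [Fintype m] [DecidableEq m]
    [Fintype n] [DecidableEq n] (u : m → E) (v : n → E) (h : ∀ i j, ⟪u i, v j⟫_𝕜 = 0) :
    (gram 𝕜 (Sum.elim u v)).det = (gram 𝕜 u).det * (gram 𝕜 v).det := by
  have hblock : gram 𝕜 (Sum.elim u v) = fromBlocks (gram 𝕜 u) 0 0 (gram 𝕜 v) := by
    ext (i | i) (j | j)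
    all_goals simp [gram_apply, h, inner_eq_zero_symm.1 (h _ _)]
  rw [hblock, det_fromBlocks_zero₂₁]

end Matrix

end

theorem gram_det_append_le_general {E : Type*} [NormedAddCommGroup E]
    [InnerProductSpace ℂ E] {k ℓ : ℕ}
    (u : Fin k → E) (v : Fin ℓ → E) :
    (gramDet (Sum.elim u v)).im = 0 ∧ 0 ≤ (gramDet (Sum.elim u v)).re ∧
    (gramDet u).im = 0 ∧ 0 ≤ (gramDet u).re ∧
    (gramDet v).im = 0 ∧ 0 ≤ (gramDet v).re ∧
    (gramDet (Sum.elim u v)).re ≤ (gramDet u).re * (gramDet v).re ∧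
    ((∀ i j, ⟪u i, v j⟫_ℂ = 0) →
      (gramDet (Sum.elim u v)).re = (gramDet u).re * (gramDet v).re) := by
  have hnonneg : ∀ {m : Type} [Fintype m] [DecidableEq m] (a : m → E), 0 ≤ gramDet a :=
    fun a => (posSemidef_gram ℂ a).det_nonneg
  obtain ⟨huv_re, huv_im⟩ := Complex.nonneg_iff.1 (hnonneg (Sum.elim u v))
  obtain ⟨hu_re, hu_im⟩ := Complex.nonneg_iff.1 (hnonneg u)
  obtain ⟨hv_re, hv_im⟩ := Complex.nonneg_iff.1 (hnonneg v)
  have hle : gramDet (Sum.elim u v) ≤ gramDet u * gramDet v :=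
    (det_gram_sumElim u v).trans_le (det_gram_append_le u v)
  refine ⟨huv_im.symm, huv_re, hu_im.symm, hu_re, hv_im.symm, hv_re, ?_, fun h => ?_⟩
  · simpa [← hu_im, ← hv_im] using (Complex.le_def.1 hle).1
  · have heq : gramDet (Sum.elim u v) = gramDet u * gramDet v :=
      det_gram_sumElim_of_orthogonal u v h
    simp [heq, ← hu_im, ← hv_im]

/-- The Gram determinant of a concatenated tuple is a nonnegative real number,
bounded above by the product of the Gram determinants of the two pieces, with
equality when the spans of the two tuples are orthogonal.
(This is `‖U ∨ V‖ ≤ ‖U‖ · ‖V‖` for decomposable multivectors.) -/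
theorem gram_det_append_le {E : Type*} [NormedAddCommGroup E]
    [InnerProductSpace ℂ E] [FiniteDimensional ℂ E] {k ℓ : ℕ}
    (u : Fin k → E) (v : Fin ℓ → E) :
    (gramDet (Sum.elim u v)).im = 0 ∧ 0 ≤ (gramDet (Sum.elim u v)).re ∧
    (gramDet u).im = 0 ∧ 0 ≤ (gramDet u).re ∧
    (gramDet v).im = 0 ∧ 0 ≤ (gramDet v).re ∧
    (gramDet (Sum.elim u v)).re ≤ (gramDet u).re * (gramDet v).re ∧
    ((∀ i j, ⟪u i, v j⟫_ℂ = 0) →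
      (gramDet (Sum.elim u v)).re = (gramDet u).re * (gramDet v).re) :=
  gram_det_append_le_general u v
end

section
/- Let E be a finite-dimensional complex inner product space, V a subspace, and π : E → V^⊥ the orthogonal projection onto the orthogonal complement of V. For v₁,…,v_ℓ spanning V and any u₁,…,u_k ∈ E, det(Gram(u₁,…,u_k,v₁,…,v_ℓ)) = det(Gram(π(u₁),…,π(u_k))) · det(Gram(v₁,…,v_ℓ)). -/
/-!
Write `uᵢ = π uᵢ + wᵢ` with `wᵢ ∈ V`. Subtracting from each `uᵢ` a combination of the `vⱼ` is a
unitriangular change of the tuple, which does not change the Gram determinant. Once the `uᵢ` are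
replaced by the `π uᵢ ∈ V^⊥`, the Gram matrix is block diagonal.
-/

open scoped InnerProductSpace

namespace Matrix

variable {𝕜 E m n : Type*} [RCLike 𝕜] [SeminormedAddCommGroup E] [InnerProductSpace 𝕜 E]

theorem gram_sum_smul [Fintype n] (B : Matrix n m 𝕜) (b : n → E) :
    gram 𝕜 (fun i => ∑ j, B j i • b j) = Bᴴ * gram 𝕜 b * B := by
  ext i i'
  simp only [gram_apply, mul_apply, sum_inner, inner_sum, inner_smul_left, inner_smul_right,
    conjTranspose_apply, RCLike.star_def, Finset.sum_mul, Finset.mul_sum]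
  exact Finset.sum_congr rfl fun _ _ => Finset.sum_congr rfl fun _ _ => by ring

theorem gram_sum_elim_of_inner_eq_zero {a : m → E} {b : n → E} (h : ∀ i j, ⟪a i, b j⟫_𝕜 = 0) :
    gram 𝕜 (Sum.elim a b) = fromBlocks (gram 𝕜 a) 0 0 (gram 𝕜 b) := by
  ext (i | i) (j | j)
  · rfl
  · exact h i j
  · exact inner_eq_zero_symm.mp (h j i)
  · rfl

theorem det_gram_sum_elim_of_inner_eq_zero [Fintype m] [Fintype n] [DecidableEq m]
    [DecidableEq n] {a : m → E} {b : n → E} (h : ∀ i j, ⟪a i, b j⟫_𝕜 = 0) :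
    (gram 𝕜 (Sum.elim a b)).det = (gram 𝕜 a).det * (gram 𝕜 b).det := by
  rw [gram_sum_elim_of_inner_eq_zero h, det_fromBlocks_zero₂₁]

theorem det_gram_sum_elim_add_of_mem_span [Fintype m] [Fintype n] [DecidableEq m]
    [DecidableEq n] (a : m → E) {w : m → E} {b : n → E}
    (hw : ∀ i, w i ∈ Submodule.span 𝕜 (Set.range b)) :
    (gram 𝕜 (Sum.elim (a + w) b)).det = (gram 𝕜 (Sum.elim a b)).det := by
  choose C hC using fun i => (Submodule.mem_span_range_iff_exists_fun 𝕜).mp (hw i)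
  set B : Matrix (m ⊕ n) (m ⊕ n) 𝕜 := fromBlocks 1 0 (of fun j i => C i j) 1
  have hB : B.det = 1 := by simp [B]
  have hcomb : Sum.elim (a + w) b = fun i => ∑ j, B j i • Sum.elim a b j := by
    ext (i | i) <;> simp [B, Fintype.sum_sum_type, one_apply, ite_smul, ← hC]
  rw [hcomb, gram_sum_smul, det_mul, det_mul, det_conjTranspose, hB, star_one, one_mul, mul_one]

end Matrix

/-- For `V = span (v₁, …, v_ℓ)` and `π` the orthogonal projection onto `V^⊥`,
`det Gram(u₁, …, u_k, v₁, …, v_ℓ) = det Gram(π u₁, …, π u_k) · det Gram(v₁, …, v_ℓ)`.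
This is `‖U ∨ V‖ = ‖Π_V^⊥ U‖ · ‖V‖` for decomposable multivectors. -/
theorem gram_det_append_eq_proj {E : Type*} [NormedAddCommGroup E]
    [InnerProductSpace ℂ E] [FiniteDimensional ℂ E] {k ℓ : ℕ}
    (u : Fin k → E) (v : Fin ℓ → E) :
    gramDet (Sum.elim u v) =
      gramDet (fun i => ((Submodule.orthogonalProjectionOnto
          (Submodule.span ℂ (Set.range v))ᗮ (u i) : ↥(Submodule.span ℂ (Set.range v))ᗮ) : E)) *
        gramDet v := by
  set V := Submodule.span ℂ (Set.range v)
  set π : Fin k → E := fun i => (Submodule.orthogonalProjectionOnto Vᗮ (u i) : E)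
  have hu : u = π + (u - π) := (add_sub_cancel π u).symm
  have hmem : ∀ i, (u - π) i ∈ V := fun i => by
    have h := Submodule.sub_starProjection_mem_orthogonal (K := Vᗮ) (u i)
    rwa [Submodule.orthogonal_orthogonal] at h
  have horth : ∀ i j, ⟪π i, v j⟫_ℂ = 0 := fun i j =>
    Submodule.inner_left_of_mem_orthogonal (Submodule.subset_span (Set.mem_range_self j))
      (Submodule.coe_mem _)
  change (Matrix.gram ℂ _).det = (Matrix.gram ℂ π).det * (Matrix.gram ℂ v).det
  rw [hu, Matrix.det_gram_sum_elim_add_of_mem_span π hmem,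
    Matrix.det_gram_sum_elim_of_inner_eq_zero horth]
end

section
/- Product formula (Gram determinant form): let E be a finite-dimensional complex inner product space, v₁,…,v_{p-1} linearly independent, and w₁, w₂ ∈ E with w₁, w₂ ∉ span(v₁,…,v_{p-1}). Writing V for the tuple (v₁,…,v_{p-1}), let A = det Gram(V, w₁), B = det Gram(V, w₂), C = det of the Gram pairing matrix of (V,w₁) against (V,w₂) (i.e. the matrix with entries ⟨xᵢ, yⱼ⟩ where x runs over (v₁,…,v_{p-1},w₁) and y over (v₁,…,v_{p-1},w₂)). Then A·B − |C|² = det Gram(V) · det Gram(V, w₁, w₂). -/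
open scoped InnerProductSpace

/-- Gram pairing determinant of two tuples of vectors. -/
noncomputable def gramPairing {E : Type*} [NormedAddCommGroup E]
    [InnerProductSpace ℂ E] {m : Type*} [Fintype m] [DecidableEq m]
    (a b : m → E) : ℂ :=
  Matrix.det (Matrix.of fun i j => ⟪a i, b j⟫_ℂ)

/-!
Write `K = span V` and split `wᵢ = pᵢ + uᵢ` with `pᵢ ∈ K` and `uᵢ ⊥ K`. Removing `pᵢ` from a
`wᵢ`-column is a column operation by the `V`-columns (and, by conjugate symmetry, from a `wᵢ`-row
a row operation by the `V`-rows), so it leaves every Gram determinant of the form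
`det Gram((V, x), (V, y))` unchanged. After this reduction the
matrices are block diagonal, each determinant factors as `det Gram(V)` times a Gram determinant of
the `uᵢ`, and the formula becomes the `2 × 2` identity
`⟪u₁, u₁⟫⟪u₂, u₂⟫ - |⟪u₁, u₂⟫|² = det Gram(u₁, u₂)`.
-/

open scoped ComplexConjugate
open Submodule (span)

section

variable {E : Type*} [NormedAddCommGroup E] [InnerProductSpace ℂ E]
  {m k : Type*} [Fintype m] [DecidableEq m] [Fintype k] [DecidableEq k]

instance finiteDimensional_span_range (v : m → E) :
    FiniteDimensional ℂ (span ℂ (Set.range v)) :=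
  FiniteDimensional.span_of_finite ℂ (Set.finite_range v)

lemma gramPairing_swap (a b : m → E) : gramPairing b a = conj (gramPairing a b) := by
  rw [gramPairing, gramPairing, ← Complex.star_def, ← Matrix.det_conjTranspose]
  congr 1
  ext i j
  simp [Matrix.conjTranspose_apply]

lemma gramPairing_fin_one (a b : Fin 1 → E) : gramPairing a b = ⟪a 0, b 0⟫_ℂ := by
  simp [gramPairing]

lemma gramPairing_fin_two (a b : Fin 2 → E) :
    gramPairing a b = ⟪a 0, b 0⟫_ℂ * ⟪a 1, b 1⟫_ℂ - ⟪a 0, b 1⟫_ℂ * ⟪a 1, b 0⟫_ℂ := by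
  simp [gramPairing, Matrix.det_fin_two]

lemma gramPairing_sum_elim_add_right (a : m ⊕ k → E) (v : m → E) (u p : k → E)
    (hp : ∀ j, p j ∈ span ℂ (Set.range v)) :
    gramPairing a (Sum.elim v (u + p)) = gramPairing a (Sum.elim v u) := by
  choose c hc using fun j => (Submodule.mem_span_range_iff_exists_fun ℂ).mp (hp j)
  have hmul : Matrix.of (fun i j => ⟪a i, Sum.elim v (u + p) j⟫_ℂ) =
      Matrix.of (fun i j => ⟪a i, Sum.elim v u j⟫_ℂ) *
        Matrix.fromBlocks 1 (Matrix.of fun i j => c j i) 0 1 := by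
    ext i (j | j) <;>
      simp [Matrix.mul_apply, Fintype.sum_sum_type, Matrix.one_apply, ← hc,
        mul_comm, add_comm]
  rw [gramPairing, gramPairing, hmul, Matrix.det_mul, Matrix.det_fromBlocks_zero₂₁]
  simp

lemma gramPairing_sum_elim_add_left (b : m ⊕ k → E) (v : m → E) (u p : k → E)
    (hp : ∀ j, p j ∈ span ℂ (Set.range v)) :
    gramPairing (Sum.elim v (u + p)) b = gramPairing (Sum.elim v u) b := by
  rw [gramPairing_swap b, gramPairing_swap b, gramPairing_sum_elim_add_right _ _ _ _ hp]

lemma gramPairing_sum_elim_of_mem_orthogonal (v : m → E) (u u' : k → E)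
    (hu : ∀ j, u j ∈ (span ℂ (Set.range v))ᗮ) (hu' : ∀ j, u' j ∈ (span ℂ (Set.range v))ᗮ) :
    gramPairing (Sum.elim v u) (Sum.elim v u') = gramPairing v v * gramPairing u u' := by
  have hv : ∀ i, v i ∈ span ℂ (Set.range v) := fun i => Submodule.subset_span ⟨i, rfl⟩
  have hvu' : ∀ i j, ⟪v i, u' j⟫_ℂ = 0 := fun i j =>
    Submodule.inner_right_of_mem_orthogonal (hv i) (hu' j)
  have huv : ∀ i j, ⟪u i, v j⟫_ℂ = 0 := fun i j =>
    Submodule.inner_left_of_mem_orthogonal (hv j) (hu i)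
  have hblock : Matrix.of (fun i j => ⟪Sum.elim v u i, Sum.elim v u' j⟫_ℂ) =
      Matrix.fromBlocks (Matrix.of fun i j => ⟪v i, v j⟫_ℂ) 0 0
        (Matrix.of fun i j => ⟪u i, u' j⟫_ℂ) := by
    ext (i | i) (j | j) <;> simp [hvu', huv]
  rw [gramPairing, hblock, Matrix.det_fromBlocks_zero₂₁, gramPairing, gramPairing]

lemma gramPairing_sum_elim_eq_mul (v : m → E) (w w' : k → E) :
    gramPairing (Sum.elim v w) (Sum.elim v w') = gramPairing v v *
      gramPairing (fun j => (span ℂ (Set.range v))ᗮ.starProjection (w j))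
        (fun j => (span ℂ (Set.range v))ᗮ.starProjection (w' j)) := by
  set K := span ℂ (Set.range v)
  have hsplit (x : k → E) :
      x = (fun j => Kᗮ.starProjection (x j)) + fun j => K.starProjection (x j) :=
    funext fun j => by simp
  conv_lhs => rw [hsplit w, hsplit w']
  rw [gramPairing_sum_elim_add_left _ _ _ _ fun j => K.starProjection_apply_mem _,
    gramPairing_sum_elim_add_right _ _ _ _ fun j => K.starProjection_apply_mem _]
  exact gramPairing_sum_elim_of_mem_orthogonal _ _ _
    (fun j => Kᗮ.starProjection_apply_mem _) fun j => Kᗮ.starProjection_apply_mem _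

end

theorem product_formula_general {E : Type*} [NormedAddCommGroup E]
    [InnerProductSpace ℂ E] {m : ℕ}
    (v : Fin m → E) (w₁ w₂ : E) :
    gramPairing (Sum.elim v ![w₁]) (Sum.elim v ![w₁]) *
        gramPairing (Sum.elim v ![w₂]) (Sum.elim v ![w₂]) -
      gramPairing (Sum.elim v ![w₁]) (Sum.elim v ![w₂]) *
        starRingEnd ℂ (gramPairing (Sum.elim v ![w₁]) (Sum.elim v ![w₂])) =
      gramPairing v v * gramPairing (Sum.elim v ![w₁, w₂]) (Sum.elim v ![w₁, w₂]) := by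
  have hG : conj (gramPairing v v) = gramPairing v v := (gramPairing_swap v v).symm
  simp only [gramPairing_sum_elim_eq_mul v, gramPairing_fin_one, gramPairing_fin_two,
    Matrix.cons_val_zero, Matrix.cons_val_one, map_mul, hG, inner_conj_symm]
  ring

/-- Product formula in Gram determinant form: with `A = det Gram(V, w₁)`,
`B = det Gram(V, w₂)` and `C` the Gram pairing of `(V, w₁)` against `(V, w₂)`,
one has `A·B − |C|² = det Gram(V) · det Gram(V, w₁, w₂)`. -/
theorem product_formula {E : Type*} [NormedAddCommGroup E]
    [InnerProductSpace ℂ E] [FiniteDimensional ℂ E] {m : ℕ}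
    (v : Fin m → E) (hv : LinearIndependent ℂ v) (w₁ w₂ : E)
    (hw₁ : w₁ ∉ Submodule.span ℂ (Set.range v))
    (hw₂ : w₂ ∉ Submodule.span ℂ (Set.range v)) :
    gramPairing (Sum.elim v ![w₁]) (Sum.elim v ![w₁]) *
        gramPairing (Sum.elim v ![w₂]) (Sum.elim v ![w₂]) -
      gramPairing (Sum.elim v ![w₁]) (Sum.elim v ![w₂]) *
        starRingEnd ℂ (gramPairing (Sum.elim v ![w₁]) (Sum.elim v ![w₂])) =
      gramPairing v v * gramPairing (Sum.elim v ![w₁, w₂]) (Sum.elim v ![w₁, w₂]) :=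
  product_formula_general v w₁ w₂
end

section
/- Annihilator lemma: let E = ℂ^q with standard inner product and V a nonzero decomposable ℓ-vector. Define G₀^k(V) = {U in the k-th exterior power of E : U∨V = 0}. Then G₀^k(V) equals the orthogonal complement, in the k-th exterior power of E (with the Grassmann-extended inner product), of the image of the k-th exterior power of span(V)^⊥. -/
/-!
Let `W = span v` and `V = v₁ ∧ ⋯ ∧ v_ℓ`. For a `k`-tuple `w` in `Wᗮ`, the Gram matrix of
`(w, v)` against `(x, v)` is block lower triangular, so pairing `U ∧ V` with `w ∧ V` gives
`B(w, U) · det (gram v)`, and `det (gram v) ≠ 0` by linear independence: annihilated elements are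
orthogonal to `⋀^k Wᗮ`. Conversely, expand `U` in the wedge basis of an orthonormal basis of `E`
adapted to `W ⊕ Wᗮ`. The coefficient of a wedge of vectors of `Wᗮ` is its `B`-pairing with `U`,
hence zero, and every other basis wedge contains a vector of `W = span v`, so is killed by `∧ V`.
-/

open scoped InnerProductSpace

noncomputable def wedgeTuple {E : Type*} [NormedAddCommGroup E]
    [InnerProductSpace ℂ E] (k : ℕ) (w : Fin k → E) : ⋀[ℂ]^k E :=
  ⟨ExteriorAlgebra.ιMulti ℂ k w, ExteriorAlgebra.ιMulti_range ℂ k ⟨w, rfl⟩⟩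

theorem Submodule.exists_orthonormalBasis_mem_or_mem_orthogonal {𝕜 E : Type*} [RCLike 𝕜]
    [NormedAddCommGroup E] [InnerProductSpace 𝕜 E] [FiniteDimensional 𝕜 E]
    (K : Submodule 𝕜 E) :
    ∃ b : OrthonormalBasis (Fin (Module.finrank 𝕜 E)) 𝕜 E, ∀ i, b i ∈ K ∨ b i ∈ Kᗮ := by
  have hK : DirectSum.IsInternal fun t : Bool => cond t K Kᗮ := by
    rw [K.orthogonalFamily_self.isInternal_iff, iSup_bool_eq]
    simp [sup_orthogonal_of_hasOrthogonalProjection]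
  refine ⟨hK.subordinateOrthonormalBasis rfl K.orthogonalFamily_self, fun i => ?_⟩
  have hmem := hK.subordinateOrthonormalBasis_subordinate rfl i K.orthogonalFamily_self
  cases h : hK.subordinateOrthonormalBasisIndex rfl i K.orthogonalFamily_self <;>
    rw [h] at hmem
  exacts [Or.inr hmem, Or.inl hmem]

theorem Matrix.det_of_inner_append_eq_mul {𝕜 E : Type*} [RCLike 𝕜] [NormedAddCommGroup E]
    [InnerProductSpace 𝕜 E] {k ℓ : ℕ} (w x : Fin k → E) (v : Fin ℓ → E)
    (hwv : ∀ i j, ⟪w i, v j⟫_𝕜 = 0) :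
    (of fun i j => ⟪Fin.append w v i, Fin.append x v j⟫_𝕜).det =
      (of fun i j => ⟪w i, x j⟫_𝕜).det * (gram 𝕜 v).det := by
  have hblocks : (of fun i j => ⟪Fin.append w v i, Fin.append x v j⟫_𝕜) =
      reindex finSumFinEquiv finSumFinEquiv
        (fromBlocks (of fun i j => ⟪w i, x j⟫_𝕜) 0 (of fun i j => ⟪v i, x j⟫_𝕜) (gram 𝕜 v)) := by
    ext i j
    induction i using Fin.addCases <;> induction j using Fin.addCases <;> simp [hwv, gram]
  rw [hblocks, det_reindex_self, det_fromBlocks_zero₁₂]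

namespace exteriorPower

section CommRing

variable {R M : Type*} [CommRing R] [AddCommGroup M] [Module R M] {k ℓ : ℕ}

theorem ιMulti_append_eq_zero_of_mem_span (g : Fin k → M) (v : Fin ℓ → M) (i : Fin k)
    (hi : g i ∈ Submodule.span R (Set.range v)) :
    ιMulti R (k + ℓ) (Fin.append g v) = 0 := by
  have key : ∀ x ∈ Submodule.span R (Set.range v),
      ιMulti R (k + ℓ) (Function.update (Fin.append g v) (Fin.castAdd ℓ i) x) = 0 := by
    intro x hx
    induction hx using Submodule.span_induction with
    | mem x hx =>
      obtain ⟨j, rfl⟩ := hx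
      have hij : Fin.castAdd ℓ i ≠ Fin.natAdd k j := by simp [Fin.ext_iff]; omega
      refine (ιMulti R _).map_eq_zero_of_eq _ (i := Fin.castAdd ℓ i) (j := Fin.natAdd k j)
        ?_ hij
      simp [Function.update_of_ne hij.symm]
    | zero => exact (ιMulti R _).map_update_zero _ _
    | add x y _ _ hx hy => rw [(ιMulti R _).map_update_add, hx, hy, add_zero]
    | smul c x _ hx => rw [(ιMulti R _).map_update_smul, hx, smul_zero]
  have := key _ hi
  rwa [← Fin.append_left g v i, Function.update_eq_self] at this

noncomputable def mulRight (V : ⋀[R]^ℓ M) : ⋀[R]^k M →ₗ[R] ⋀[R]^(k + ℓ) M :=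
  (LinearMap.mulRight R (V : ExteriorAlgebra R M) ∘ₗ (⋀[R]^k M).subtype).codRestrict _
    fun X => SetLike.mul_mem_graded X.2 V.2

theorem mulRight_ιMulti (v : Fin ℓ → M) (x : Fin k → M) :
    mulRight (ιMulti R ℓ v) (ιMulti R k x) = ιMulti R (k + ℓ) (Fin.append x v) :=
  Subtype.ext (ExteriorAlgebra.ιMulti_mul_ιMulti x v)

end CommRing

variable {𝕜 E : Type*} [RCLike 𝕜] [NormedAddCommGroup E] [InnerProductSpace 𝕜 E] {n k ℓ : ℕ}

noncomputable def gramForm (a : Fin n → E) : ⋀[𝕜]^n E →ₗ[𝕜] 𝕜 :=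
  pairingDual 𝕜 E n (ιMulti 𝕜 n fun i => innerₛₗ 𝕜 (a i))

theorem gramForm_ιMulti (a x : Fin n → E) :
    gramForm a (ιMulti 𝕜 n x) = (Matrix.of fun i j => ⟪a i, x j⟫_𝕜).det := by
  rw [gramForm, pairingDual_ιMulti_ιMulti, ← Matrix.det_transpose]
  rfl

theorem eq_gramForm_of_apply_ιMulti (a : Fin n → E) (f : ⋀[𝕜]^n E →ₗ[𝕜] 𝕜)
    (hf : ∀ x, f (ιMulti 𝕜 n x) = (Matrix.of fun i j => ⟪a i, x j⟫_𝕜).det) :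
    f = gramForm a :=
  linearMap_ext <| AlternatingMap.ext fun x => by simp [hf, gramForm_ιMulti]

theorem _root_.OrthonormalBasis.exteriorPower_repr_apply {ι : Type*} [Fintype ι]
    [LinearOrder ι] (b : OrthonormalBasis ι 𝕜 E) (X : ⋀[𝕜]^n E) (s : Set.powersetCard ι n) :
    (b.toBasis.exteriorPower n).repr X s =
      gramForm (b ∘ Set.powersetCard.ofFinEmbEquiv.symm s) X := by
  rw [basis_repr_apply, ιMultiDual, gramForm, ιMulti_family]
  congr 3
  ext i x
  simp [b.repr_apply_apply]

theorem gramForm_append_mulRight_ιMulti (v : Fin ℓ → E) {w : Fin k → E}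
    (hw : ∀ i, w i ∈ (Submodule.span 𝕜 (Set.range v))ᗮ) (X : ⋀[𝕜]^k E) :
    gramForm (Fin.append w v) (mulRight (ιMulti 𝕜 ℓ v) X) =
      gramForm w X * (Matrix.gram 𝕜 v).det := by
  have hwv : ∀ i j, ⟪w i, v j⟫_𝕜 = 0 := fun i j =>
    Submodule.inner_left_of_mem_orthogonal (Submodule.subset_span (Set.mem_range_self j)) (hw i)
  suffices (gramForm (Fin.append w v)).comp (mulRight (ιMulti 𝕜 ℓ v)) =
      (Matrix.gram 𝕜 v).det • gramForm w from
    (LinearMap.congr_fun this X).trans (mul_comm _ _)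
  refine linearMap_ext (AlternatingMap.ext fun x => ?_)
  simp [mulRight_ιMulti, gramForm_ιMulti, Matrix.det_of_inner_append_eq_mul w x v hwv, mul_comm]

theorem mulRight_ιMulti_eq_zero_of_gramForm_eq_zero [FiniteDimensional 𝕜 E] (v : Fin ℓ → E)
    (X : ⋀[𝕜]^k E)
    (hX : ∀ w : Fin k → E, (∀ i, w i ∈ (Submodule.span 𝕜 (Set.range v))ᗮ) → gramForm w X = 0) :
    mulRight (ιMulti 𝕜 ℓ v) X = 0 := by
  obtain ⟨b, hb⟩ := (Submodule.span 𝕜 (Set.range v)).exists_orthonormalBasis_mem_or_mem_orthogonal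
  set β := b.toBasis.exteriorPower k
  rw [← β.sum_repr X, map_sum]
  refine Finset.sum_eq_zero fun s _ => ?_
  set e := b ∘ Set.powersetCard.ofFinEmbEquiv.symm s
  by_cases hs : ∀ i, e i ∈ (Submodule.span 𝕜 (Set.range v))ᗮ
  · rw [b.exteriorPower_repr_apply, hX e hs, zero_smul, map_zero]
  · obtain ⟨i, hi⟩ := not_forall.1 hs
    have hβs : β s = ιMulti 𝕜 k e := by simp [β, e, ιMulti_family]
    rw [map_smul, hβs, mulRight_ιMulti,
      ιMulti_append_eq_zero_of_mem_span e v i ((hb _).resolve_right hi), smul_zero]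

end exteriorPower

/-- Annihilator lemma: let `V = v₁ ∨ ⋯ ∨ v_ℓ` be a nonzero decomposable `ℓ`-vector
in `ℂ^q` and `B` the canonical Grassmann (Hermitian) extension of the inner product
to the `k`-th exterior power (characterized by Gram determinants on decomposables).
Then the annihilator `{U : U ∨ V = 0}` equals the `B`-orthogonal complement of the
image of the `k`-th exterior power of `span(V)^⊥`. -/
theorem annihilator_eq_orthogonal_complement {q k ℓ : ℕ}
    (v : Fin ℓ → EuclideanSpace ℂ (Fin q)) (hv : LinearIndependent ℂ v)
    (B : ⋀[ℂ]^k (EuclideanSpace ℂ (Fin q)) →ₗ⋆[ℂ]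
      ⋀[ℂ]^k (EuclideanSpace ℂ (Fin q)) →ₗ[ℂ] ℂ)
    (hB : ∀ a b : Fin k → EuclideanSpace ℂ (Fin q),
      B (wedgeTuple k a) (wedgeTuple k b) =
        Matrix.det (Matrix.of fun i j => ⟪a i, b j⟫_ℂ)) :
    {U : ⋀[ℂ]^k (EuclideanSpace ℂ (Fin q)) |
        (U : ExteriorAlgebra ℂ (EuclideanSpace ℂ (Fin q))) *
          (ExteriorAlgebra.ιMulti ℂ ℓ v) = 0} =
      {U : ⋀[ℂ]^k (EuclideanSpace ℂ (Fin q)) |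
        ∀ w : Fin k → EuclideanSpace ℂ (Fin q),
          (∀ i, w i ∈ (Submodule.span ℂ (Set.range v))ᗮ) →
            B (wedgeTuple k w) U = 0} := by
  have hB_eq : ∀ w, B (wedgeTuple k w) = exteriorPower.gramForm w := fun w =>
    exteriorPower.eq_gramForm_of_apply_ιMulti w _ (hB w)
  have hgram : (Matrix.gram ℂ v).det ≠ 0 := Matrix.det_gram_ne_zero_iff_linearIndependent.2 hv
  ext U
  have hann : (U : ExteriorAlgebra ℂ _) * ExteriorAlgebra.ιMulti ℂ ℓ v = 0 ↔
      exteriorPower.mulRight (exteriorPower.ιMulti ℂ ℓ v) U = 0 :=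
    ZeroMemClass.coe_eq_zero (x := exteriorPower.mulRight (exteriorPower.ιMulti ℂ ℓ v) U)
  simp only [Set.mem_ofPred_eq, hB_eq, hann]
  refine ⟨fun hU w hw => ?_, exteriorPower.mulRight_ιMulti_eq_zero_of_gramForm_eq_zero v U⟩
  have hfactor := exteriorPower.gramForm_append_mulRight_ιMulti v hw U
  rw [hU, map_zero] at hfactor
  exact (mul_eq_zero.1 hfactor.symm).resolve_right hgram
end

section
/- Measure of tubular neighborhoods of projective subspaces: let L be an ℓ-dimensional complex projective subspace of ℙ^n(ℂ) with the angular metric d and Lebesgue (Fubini–Study) measure. Then there is a constant C (depending only on n, ℓ) such that for all r > 0, Leb{u ∈ ℙ^n(ℂ) : d(u, L) ≤ r} ≤ C·r^{2(n−ℓ)}. -/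
/-!
Write `P` and `Q` for the orthogonal projections onto `L` and `Lᗮ`. For a unit vector `x` and
`y ∈ L`, Cauchy–Schwarz gives `|⟪x, y⟫| ≤ ‖P x‖ ‖y‖`, so the angular distance from `x` to `L` is at
least `‖Q x‖`. Hence the tube is contained in `{x : ‖Q x‖ ≤ r}`, whose cone `(0, 1) • {…}` lies in
the image of the ball of radius `2` under the real-linear map `P + r Q`. That map has determinant
`r ^ dim_ℝ Lᗮ = r ^ (2 (n - ℓ))`, which scales the Haar measure accordingly.
-/

open MeasureTheory Metric Module Set
open scoped InnerProductSpace Pointwise ENNReal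

namespace Submodule

section AngularDistance

variable {𝕜 E : Type*} [RCLike 𝕜] [NormedAddCommGroup E] [InnerProductSpace 𝕜 E]
  (K : Submodule 𝕜 E) [K.HasOrthogonalProjection]

theorem norm_sq_starProjection_orthogonal_le (x : E) {y : E} (hy : y ∈ K) :
    ‖Kᗮ.starProjection x‖ ^ 2 ≤ ‖x‖ ^ 2 - ‖⟪x, y⟫_𝕜‖ ^ 2 / ‖y‖ ^ 2 := by
  have hinner : ⟪x, y⟫_𝕜 = ⟪K.starProjection x, y⟫_𝕜 := by
    rw [inner_starProjection_left_eq_right, K.starProjection_eq_self_iff.2 hy]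
  have hCS : ‖⟪x, y⟫_𝕜‖ ^ 2 / ‖y‖ ^ 2 ≤ ‖K.starProjection x‖ ^ 2 := by
    refine div_le_of_le_mul₀ (by positivity) (by positivity) ?_
    rw [hinner, ← mul_pow]
    exact pow_le_pow_left₀ (norm_nonneg _) (norm_inner_le_norm _ _) 2
  linarith [K.norm_sq_eq_add_norm_sq_starProjection x]

theorem norm_starProjection_orthogonal_le_sInf (hK : K ≠ ⊥) {x : E} (hx : ‖x‖ = 1) :
    ‖Kᗮ.starProjection x‖ ≤
      sInf {s : ℝ | ∃ y ∈ K, y ≠ 0 ∧ s = Real.sqrt (1 - ‖⟪x, y⟫_𝕜‖ ^ 2 / ‖y‖ ^ 2)} := by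
  obtain ⟨y₀, hy₀, hy₀0⟩ := K.ne_bot_iff.1 hK
  refine le_csInf ⟨_, y₀, hy₀, hy₀0, rfl⟩ ?_
  rintro _ ⟨y, hy, -, rfl⟩
  refine Real.le_sqrt_of_sq_le ?_
  simpa [hx] using K.norm_sq_starProjection_orthogonal_le x hy

end AngularDistance

variable {E : Type*} [NormedAddCommGroup E] [InnerProductSpace ℂ E]
  (K : Submodule ℂ E) [K.HasOrthogonalProjection]

noncomputable def orthogonalStretch (r : ℝ) : E →ₗ[ℝ] E :=
  (K.starProjection : E →ₗ[ℂ] E).restrictScalars ℝ +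
    r • (Kᗮ.starProjection : E →ₗ[ℂ] E).restrictScalars ℝ

theorem orthogonalStretch_apply (r : ℝ) (x : E) :
    K.orthogonalStretch r x = K.starProjection x + r • Kᗮ.starProjection x :=
  rfl

theorem orthogonalStretch_add_of_mem {a b : E} (ha : a ∈ K) (hb : b ∈ Kᗮ) (r : ℝ) :
    K.orthogonalStretch r (a + b) = a + r • b := by
  rw [orthogonalStretch_apply, map_add, map_add, K.starProjection_eq_self_iff.2 ha,
    K.starProjection_apply_eq_zero_iff.2 hb, Kᗮ.starProjection_eq_self_iff.2 hb,
    Kᗮ.starProjection_apply_eq_zero_iff.2 (K.le_orthogonal_orthogonal ha), add_zero, zero_add]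

theorem orthogonalStretch_orthogonalStretch (r s : ℝ) (x : E) :
    K.orthogonalStretch r (K.orthogonalStretch s x) = K.orthogonalStretch (r * s) x := by
  rw [orthogonalStretch_apply K s, orthogonalStretch_add_of_mem K (K.starProjection_apply_mem x)
    (Kᗮ.smul_of_tower_mem s (Kᗮ.starProjection_apply_mem x)), smul_smul, orthogonalStretch_apply]

theorem orthogonalStretch_one (x : E) : K.orthogonalStretch 1 x = x := by
  simp [orthogonalStretch_apply]

theorem det_orthogonalStretch [FiniteDimensional ℂ E] (r : ℝ) :
    LinearMap.det (K.orthogonalStretch r) = r ^ finrank ℝ Kᗮ := by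
  let e : (K × Kᗮ) ≃ₗ[ℝ] E :=
    (K.prodEquivOfIsCompl Kᗮ K.isCompl_orthogonal).restrictScalars ℝ
  have hconj : K.orthogonalStretch r =
      (e : (K × Kᗮ) →ₗ[ℝ] E) ∘ₗ (LinearMap.id.prodMap (r • LinearMap.id)) ∘ₗ
        (e.symm : E →ₗ[ℝ] K × Kᗮ) := by
    ext x
    obtain ⟨⟨a, b⟩, rfl⟩ := e.surjective x
    simpa [e] using K.orthogonalStretch_add_of_mem a.2 b.2 r
  rw [hconj, LinearMap.det_conj, LinearMap.det_prodMap, LinearMap.det_id, one_mul,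
    LinearMap.det_smul, LinearMap.det_id, mul_one]

theorem Ioo_smul_sphere_subset_image_orthogonalStretch {r : ℝ} (hr : 0 < r) :
    Ioo (0 : ℝ) 1 • ((↑) '' {x : sphere (0 : E) 1 | ‖Kᗮ.starProjection x‖ ≤ r}) ⊆
      K.orthogonalStretch r '' ball 0 2 := by
  rintro _ ⟨c, ⟨hc0, hc1⟩, _, ⟨x, hx, rfl⟩, rfl⟩
  have hx1 : ‖(x : E)‖ = 1 := mem_sphere_zero_iff_norm.1 x.2
  refine ⟨K.orthogonalStretch r⁻¹ (c • (x : E)), ?_, ?_⟩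
  · have hP : ‖K.starProjection (x : E)‖ ≤ 1 := (K.norm_starProjection_apply_le _).trans hx1.le
    have hQ : ‖r⁻¹ • Kᗮ.starProjection (x : E)‖ ≤ 1 := by
      rw [norm_smul, Real.norm_of_nonneg (by positivity)]
      exact inv_mul_le_one_of_le₀ hx hr.le
    rw [mem_ball_zero_iff, map_smul, norm_smul, Real.norm_of_nonneg hc0.le,
      orthogonalStretch_apply]
    nlinarith [norm_add_le (K.starProjection (x : E)) (r⁻¹ • Kᗮ.starProjection (x : E))]
  · rw [orthogonalStretch_orthogonalStretch, mul_inv_cancel₀ hr.ne', orthogonalStretch_one]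

variable [FiniteDimensional ℂ E] [MeasurableSpace E] [BorelSpace E]
  (μ : Measure E) [μ.IsAddHaarMeasure]

theorem toSphere_setOf_norm_starProjection_orthogonal_le {r : ℝ} (hr : 0 < r) :
    μ.toSphere {x | ‖Kᗮ.starProjection x‖ ≤ r} ≤
      finrank ℝ E * (ENNReal.ofReal (r ^ finrank ℝ Kᗮ) * μ (ball 0 2)) := by
  have hmeas : MeasurableSet {x : sphere (0 : E) 1 | ‖Kᗮ.starProjection x‖ ≤ r} :=
    measurableSet_le (by fun_prop) measurable_const
  calc μ.toSphere {x | ‖Kᗮ.starProjection x‖ ≤ r}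
      = finrank ℝ E * μ (Ioo (0 : ℝ) 1 • ((↑) '' {x : sphere (0 : E) 1 |
          ‖Kᗮ.starProjection x‖ ≤ r})) := μ.toSphere_apply' hmeas
    _ ≤ finrank ℝ E * μ (K.orthogonalStretch r '' ball 0 2) :=
        by gcongr; exact K.Ioo_smul_sphere_subset_image_orthogonalStretch hr
    _ = finrank ℝ E * (ENNReal.ofReal (r ^ finrank ℝ Kᗮ) * μ (ball 0 2)) := by
        rw [Measure.addHaar_image_linearMap, det_orthogonalStretch, abs_of_pos (by positivity)]

theorem exists_toSphere_setOf_norm_starProjection_orthogonal_le :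
    ∃ C : ℝ, 0 < C ∧ ∀ r : ℝ, 0 < r →
      μ.toSphere {x | ‖Kᗮ.starProjection x‖ ≤ r} ≤ ENNReal.ofReal (C * r ^ finrank ℝ Kᗮ) := by
  set A := (finrank ℝ E * μ (ball (0 : E) 2)).toReal
  have hA : finrank ℝ E * μ (ball (0 : E) 2) = ENNReal.ofReal A :=
    (ENNReal.ofReal_toReal (by finiteness)).symm
  refine ⟨A + 1, by positivity, fun r hr ↦
    (K.toSphere_setOf_norm_starProjection_orthogonal_le μ hr).trans ?_⟩
  rw [mul_left_comm, hA, ← ENNReal.ofReal_mul (by positivity), mul_comm]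
  gcongr
  linarith

end Submodule

theorem measure_tubular_neighborhood_general {E : Type*} [NormedAddCommGroup E]
    [InnerProductSpace ℂ E] [FiniteDimensional ℂ E]
    [MeasurableSpace E] [BorelSpace E] {n ℓ : ℕ}
    (hdim : Module.finrank ℂ E = n + 1)
    (L : Submodule ℂ E) (hL : Module.finrank ℂ L = ℓ + 1) :
    ∃ C : ℝ, 0 < C ∧ ∀ r : ℝ, 0 < r →
      (Measure.addHaar : Measure E).toSphere
        {x : Metric.sphere (0 : E) 1 |
          sInf {s : ℝ | ∃ y ∈ L, y ≠ 0 ∧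
            s = Real.sqrt (1 - ‖⟪(x : E), y⟫_ℂ‖ ^ 2 / ‖y‖ ^ 2)} ≤ r} ≤
        ENNReal.ofReal (C * r ^ (2 * (n - ℓ))) := by
  have hL0 : L ≠ ⊥ := fun h ↦ by rw [h, finrank_bot] at hL; omega
  have hcodim : finrank ℝ Lᗮ = 2 * (n - ℓ) := by
    have hsum := L.finrank_add_finrank_orthogonal
    rw [finrank_real_of_complex]
    omega
  obtain ⟨C, hC, hbound⟩ :=
    L.exists_toSphere_setOf_norm_starProjection_orthogonal_le Measure.addHaar
  refine ⟨C, hC, fun r hr ↦ (measure_mono fun x hx ↦ ?_).trans (hcodim ▸ hbound r hr)⟩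
  exact (L.norm_starProjection_orthogonal_le_sInf hL0 (mem_sphere_zero_iff_norm.1 x.2)).trans hx

/-- Measure of tubular neighborhoods of projective subspaces: if `L` is an
`ℓ`-dimensional projective subspace of `ℙ^n(ℂ)` (the projectivization of an
`(ℓ+1)`-dimensional linear subspace of `ℂ^{n+1}`), then the measure (the natural
rotation-invariant measure, realized on the unit sphere, which fibers over the
Fubini–Study measure) of the set of points at angular distance at most `r` from
`L` is `≤ C · r^{2(n−ℓ)}` for a constant `C = C(n, ℓ)`. -/
theorem measure_tubular_neighborhood {E : Type*} [NormedAddCommGroup E]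
    [InnerProductSpace ℂ E] [FiniteDimensional ℂ E]
    [MeasurableSpace E] [BorelSpace E] {n ℓ : ℕ}
    (hdim : Module.finrank ℂ E = n + 1) (hℓ : ℓ ≤ n - 1)
    (L : Submodule ℂ E) (hL : Module.finrank ℂ L = ℓ + 1) :
    ∃ C : ℝ, 0 < C ∧ ∀ r : ℝ, 0 < r →
      (Measure.addHaar : Measure E).toSphere
        {x : Metric.sphere (0 : E) 1 |
          sInf {s : ℝ | ∃ y ∈ L, y ≠ 0 ∧
            s = Real.sqrt (1 - ‖⟪(x : E), y⟫_ℂ‖ ^ 2 / ‖y‖ ^ 2)} ≤ r} ≤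
        ENNReal.ofReal (C * r ^ (2 * (n - ℓ))) :=
  measure_tubular_neighborhood_general hdim L hL
end
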